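/- Let t ≥ 4, let z_1 ≥ 0 and z_2 be a real number, and let a ≥ 0, b ≥ 0 with a^t ≤ b. If X is a symmetric random variable with EX^2 = a^2 and E|X|^t = b, and U is a Rademacher random variable, then E|z_1 X + z_2|^t − b z_1^t ≥ E|a z_1 U + z_2|^t − a^t z_1^t. -/

import Mathlib

/-!
Put `f = |·| ^ t`. By symmetry of `X` the right-hand side is half of `E[secondDiff f z₂ (z₁ X)]`,
and as `U` is Rademacher the left-hand side is half of `secondDiff f z₂ (a z₁)`. Since
`E[(z₁ X)²] = (a z₁)²`, the claim is Jensen's inequality for `s ↦ secondDiff f z₂ (√s)`, which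
is convex on `[0, ∞)`: its derivative is `t / 2 · g (√s) / √s` with
`g = secondDiff (oddRpow (t - 2)) z₂`, and `g x / x` increases because `g` is convex on `[0, ∞)`
with `g 0 = 0`. This is where `t ≥ 4` enters: `g''` is a positive multiple of
`secondDiff (oddRpow (t - 4)) z₂`, which is nonnegative on `[0, ∞)` by convexity of
`y ↦ y ^ (t - 3)` when `x ≥ |z₂|` and by its superadditivity when `x < |z₂|`.
-/

open MeasureTheory ProbabilityTheory Set

def secondDiff (f : ℝ → ℝ) (c x : ℝ) : ℝ := f (x + c) + f (x - c) - 2 * f x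

noncomputable def oddRpow (r y : ℝ) : ℝ := |y| ^ r * y

lemma secondDiff_neg_step (f : ℝ → ℝ) (c x : ℝ) :
    secondDiff f (-c) x = secondDiff f c x := by
  simp only [secondDiff, sub_neg_eq_add, ← sub_eq_add_neg]
  ring

lemma secondDiff_abs_of_even {f : ℝ → ℝ} (hf : f.Even) (c x : ℝ) :
    secondDiff f c |x| = secondDiff f c x := by
  rcases abs_choice x with h | h
  · rw [h]
  · rw [h, secondDiff, secondDiff, ← hf (-x + c), ← hf (-x - c), ← hf (-x)]
    ring_nf

lemma hasDerivAt_secondDiff {f f' : ℝ → ℝ} (hf : ∀ y, HasDerivAt f (f' y) y) (c x : ℝ) :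
    HasDerivAt (secondDiff f c) (secondDiff f' c x) x := by
  have hsub := (hf (x - c)).comp_add_const x (-c)
  simp only [← sub_eq_add_neg] at hsub
  exact (((hf (x + c)).comp_add_const x c).add hsub).sub ((hf x).const_mul 2)

lemma Continuous.secondDiff {f : ℝ → ℝ} (hf : Continuous f) (c : ℝ) :
    Continuous (secondDiff f c) := by
  unfold _root_.secondDiff; fun_prop

lemma hasDerivAt_oddRpow {r : ℝ} (hr : 1 < r) (y : ℝ) :
    HasDerivAt (oddRpow r) ((r + 1) * |y| ^ r) y := by
  refine ((hasDerivAt_abs_rpow y hr).mul (hasDerivAt_id' y)).congr_deriv ?_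
  rcases eq_or_ne y 0 with rfl | hy
  · simp [Real.zero_rpow (by linarith : r ≠ 0)]
  · have : |y| ^ r = |y| ^ (r - 2) * y ^ 2 := by
      rw [← sq_abs, ← Real.rpow_natCast, ← Real.rpow_add (abs_pos.2 hy)]; norm_num
    rw [this]; ring

lemma oddRpow_neg (r y : ℝ) : oddRpow r (-y) = -oddRpow r y := by
  simp only [oddRpow, abs_neg, mul_neg]

lemma oddRpow_of_nonneg {r y : ℝ} (hr : 0 ≤ r) (hy : 0 ≤ y) : oddRpow r y = y ^ (r + 1) := by
  rw [oddRpow, abs_of_nonneg hy, Real.rpow_add_one' hy (by linarith)]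

lemma secondDiff_oddRpow_nonneg {q : ℝ} (hq : 0 ≤ q) (c : ℝ) {x : ℝ} (hx : 0 ≤ x) :
    0 ≤ secondDiff (oddRpow q) c x := by
  wlog hc : 0 ≤ c generalizing c
  · simpa [secondDiff_neg_step] using this (-c) (by linarith)
  have hq1 : 1 ≤ q + 1 := by linarith
  rw [secondDiff, oddRpow_of_nonneg hq (by linarith), oddRpow_of_nonneg hq hx]
  rcases le_total c x with hcx | hxc
  · rw [oddRpow_of_nonneg hq (by linarith)]
    have hmid := (convexOn_rpow hq1).2 (x := x - c) (y := x + c) (mem_Ici.2 (by linarith))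
      (mem_Ici.2 (by linarith)) (by norm_num : (0:ℝ) ≤ 1 / 2) (by norm_num : (0:ℝ) ≤ 1 / 2)
      (by norm_num)
    simp only [smul_eq_mul] at hmid
    rw [show 1 / 2 * (x - c) + 1 / 2 * (x + c) = x by ring] at hmid
    linarith
  · have hneg : oddRpow q (x - c) = -(c - x) ^ (q + 1) := by
      rw [← neg_sub, oddRpow_neg, oddRpow_of_nonneg hq (by linarith)]
    have hsuper := Real.add_rpow_le_rpow_add (sub_nonneg.2 hxc) (by linarith : 0 ≤ 2 * x) hq1
    have hdouble : 2 * x ^ (q + 1) ≤ (2 * x) ^ (q + 1) := by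
      rw [Real.mul_rpow (by norm_num) hx]
      gcongr
      calc (2:ℝ) = 2 ^ (1:ℝ) := (Real.rpow_one 2).symm
        _ ≤ 2 ^ (q + 1) := Real.rpow_le_rpow_of_exponent_le one_le_two hq1
    rw [show c - x + 2 * x = x + c by ring] at hsuper
    rw [hneg]
    linarith

lemma convexOn_secondDiff_oddRpow {r : ℝ} (hr : 2 ≤ r) (c : ℝ) :
    ConvexOn ℝ (Ici 0) (secondDiff (oddRpow r) c) := by
  refine convexOn_of_hasDerivWithinAt2_nonneg (convex_Ici 0)
    (f' := secondDiff (fun y => (r + 1) * |y| ^ r) c)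
    (f'' := secondDiff (fun y => (r + 1) * (r * |y| ^ (r - 2) * y)) c)
    (Continuous.secondDiff (f := oddRpow r)
      ((continuous_abs.rpow_const fun _ => Or.inr (by linarith)).mul continuous_id) c).continuousOn
    ?_ ?_ ?_ <;> rw [interior_Ici] <;> intro x hx
  · exact (hasDerivAt_secondDiff (fun y => hasDerivAt_oddRpow (by linarith) y) c x
      ).hasDerivWithinAt
  · exact (hasDerivAt_secondDiff
      (fun y => (hasDerivAt_abs_rpow y (by linarith)).const_mul (r + 1)) c x).hasDerivWithinAt
  · have hnonneg := secondDiff_oddRpow_nonneg (q := r - 2) (by linarith) c (le_of_lt hx)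
    have hfactor : secondDiff (fun y => (r + 1) * (r * |y| ^ (r - 2) * y)) c x
        = (r + 1) * r * secondDiff (oddRpow (r - 2)) c x := by
      simp only [secondDiff, oddRpow]; ring
    rw [hfactor]
    exact mul_nonneg (mul_nonneg (by linarith) (by linarith)) hnonneg

lemma ConvexOn.monotoneOn_div_of_map_zero {f : ℝ → ℝ} (hf : ConvexOn ℝ (Ici 0) f)
    (h0 : f 0 = 0) : MonotoneOn (fun x => f x / x) (Ioi 0) := by
  intro x hx y hy hxy
  simpa [h0] using hf.secant_mono (a := 0) (mem_Ici.2 le_rfl) (mem_Ici.2 (le_of_lt hx))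
    (mem_Ici.2 (le_of_lt hy)) hx.ne' hy.ne' hxy

lemma convexOn_comp_sqrt_of_monotoneOn_deriv_div {F F' : ℝ → ℝ}
    (hF : ContinuousOn F (Ici 0)) (hF' : ∀ x, 0 < x → HasDerivAt F (F' x) x)
    (hmono : MonotoneOn (fun x => F' x / x) (Ioi 0)) :
    ConvexOn ℝ (Ici 0) (fun s => F (√s)) := by
  have hderiv : ∀ s, 0 < s → HasDerivAt (fun s => F (√s)) (F' √s / √s / 2) s := by
    intro s hs
    have hsqrt := Real.sqrt_pos.2 hs
    refine ((hF' _ hsqrt).comp s (Real.hasDerivAt_sqrt hs.ne')).congr_deriv ?_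
    field_simp
  refine MonotoneOn.convexOn_of_deriv (convex_Ici 0)
    (hF.comp Real.continuous_sqrt.continuousOn fun s _ => Real.sqrt_nonneg s) ?_ ?_ <;>
    rw [interior_Ici]
  · exact fun s hs => (hderiv s hs).differentiableAt.differentiableWithinAt
  · intro s hs s' hs' hss'
    rw [(hderiv s hs).deriv, (hderiv s' hs').deriv]
    exact div_le_div_of_nonneg_right
      (hmono (Real.sqrt_pos.2 hs) (Real.sqrt_pos.2 hs') (Real.sqrt_le_sqrt hss')) zero_le_two

lemma convexOn_secondDiff_abs_rpow_sqrt {p : ℝ} (hp : 4 ≤ p) (c : ℝ) :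
    ConvexOn ℝ (Ici 0) (fun s => secondDiff (fun y => |y| ^ p) c √s) := by
  refine convexOn_comp_sqrt_of_monotoneOn_deriv_div
    (F' := fun x => p * secondDiff (oddRpow (p - 2)) c x)
    ((continuous_abs.rpow_const fun _ => Or.inr (by linarith)).secondDiff c).continuousOn
    (fun x _ => ?_) ?_
  · refine (hasDerivAt_secondDiff (fun y => hasDerivAt_abs_rpow y (by linarith)) c x
      ).congr_deriv ?_
    simp only [secondDiff, oddRpow]; ring
  · have h0 : secondDiff (oddRpow (p - 2)) c 0 = 0 := by
      simp [secondDiff, oddRpow]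
    intro x hx y hy hxy
    simp only [mul_div_assoc]
    exact mul_le_mul_of_nonneg_left
      ((convexOn_secondDiff_oddRpow (by linarith) c).monotoneOn_div_of_map_zero h0 hx hy hxy)
      (by linarith)

lemma integral_comp_rademacher {Ω : Type*} [MeasurableSpace Ω] {μ : Measure Ω}
    [IsProbabilityMeasure μ] {U : Ω → ℝ} (hU : Measurable U)
    (hU1 : μ {ω | U ω = 1} = 1 / 2) (hU2 : μ {ω | U ω = -1} = 1 / 2)
    {f : ℝ → ℝ} (hf : Measurable f) :
    ∫ ω, f (U ω) ∂μ = (f 1 + f (-1)) / 2 := by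
  have hmeas : ∀ u : ℝ, MeasurableSet {ω | U ω = u} := fun u => hU (measurableSet_singleton u)
  have hae : ∀ᵐ ω ∂μ, U ω = 1 ∨ U ω = -1 := by
    rw [ae_iff_measure_eq (p := fun ω => U ω = 1 ∨ U ω = -1)
      ((hmeas 1).union (hmeas (-1))).nullMeasurableSet, ofPred_or,
      measure_union _ (hmeas (-1)), hU1, hU2, measure_univ, ENNReal.add_halves]
    exact disjoint_left.2 fun ω (h1 : U ω = 1) (h2 : U ω = -1) => by linarith
  have hint : ∀ u : ℝ, Integrable f (μ (U ⁻¹' {u}) • Measure.dirac u) := fun u =>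
    (integrable_dirac (by simp)).smul_measure (measure_ne_top _ _)
  rw [← integral_map hU.aemeasurable hf.aestronglyMeasurable,
    (Measure.ae_eq_or_eq_iff_map_eq_dirac_add_dirac hU.aemeasurable (by norm_num)).1 hae,
    integral_add_measure (hint 1) (hint (-1)), integral_smul_measure, integral_smul_measure,
    integral_dirac, integral_dirac]
  simp only [preimage, mem_singleton_iff, hU1, hU2, smul_eq_mul]
  norm_num
  ring

section Moments

variable {Ω : Type*} [MeasurableSpace Ω] {μ : Measure Ω} {X : Ω → ℝ} {t : ℝ}

lemma memLp_ofReal_of_integrable_abs_rpow (hX : AEStronglyMeasurable X μ) (ht : 0 < t)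
    (hint : Integrable (fun ω => |X ω| ^ t) μ) : MemLp X (ENNReal.ofReal t) μ := by
  refine (integrable_norm_rpow_iff hX (by simpa using ht) ENNReal.ofReal_ne_top).1 ?_
  simpa [ENNReal.toReal_ofReal ht.le] using hint

lemma integrable_abs_mul_add_rpow [IsFiniteMeasure μ] (hX : AEStronglyMeasurable X μ)
    (ht : 0 < t) (hint : Integrable (fun ω => |X ω| ^ t) μ) (d c : ℝ) :
    Integrable (fun ω => |d * X ω + c| ^ t) μ := by
  simpa [ENNReal.toReal_ofReal ht.le] using
    (((memLp_ofReal_of_integrable_abs_rpow hX ht hint).const_mul d).add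
      (memLp_const c)).integrable_norm_rpow'

lemma integrable_secondDiff_abs_rpow [IsFiniteMeasure μ] (hX : AEStronglyMeasurable X μ)
    (ht : 0 < t) (hint : Integrable (fun ω => |X ω| ^ t) μ) (d c : ℝ) :
    Integrable (fun ω => secondDiff (fun y => |y| ^ t) c (d * X ω)) μ := by
  have hsub := integrable_abs_mul_add_rpow hX ht hint d (-c)
  have hzero := integrable_abs_mul_add_rpow hX ht hint d 0
  simp only [← sub_eq_add_neg, add_zero] at hsub hzero
  exact ((integrable_abs_mul_add_rpow hX ht hint d c).add hsub).sub (hzero.const_mul 2)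

lemma integrable_sq_of_integrable_abs_rpow [IsFiniteMeasure μ] (hX : AEStronglyMeasurable X μ)
    (ht : 2 ≤ t) (hint : Integrable (fun ω => |X ω| ^ t) μ) :
    Integrable (fun ω => X ω ^ 2) μ :=
  ((memLp_ofReal_of_integrable_abs_rpow hX (by linarith) hint).mono_exponent
    (by simpa using ht)).integrable_sq

lemma integral_comp_eq_integral_comp_neg (hX : Measurable X)
    (hsymm : μ.map X = μ.map (fun ω => -X ω)) {φ : ℝ → ℝ} (hφ : Measurable φ) :
    ∫ ω, φ (X ω) ∂μ = ∫ ω, φ (-X ω) ∂μ :=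
  (IdentDistrib.comp ⟨hX.aemeasurable, hX.neg.aemeasurable, hsymm⟩ hφ).integral_eq

lemma integral_secondDiff_abs_rpow_of_symm [IsFiniteMeasure μ] (hX : Measurable X)
    (hsymm : μ.map X = μ.map (fun ω => -X ω)) (ht : 0 < t)
    (hint : Integrable (fun ω => |X ω| ^ t) μ) {d : ℝ} (hd : 0 ≤ d) (c : ℝ) :
    ∫ ω, secondDiff (fun y => |y| ^ t) c (d * X ω) ∂μ
      = 2 * ∫ ω, |d * X ω + c| ^ t ∂μ - 2 * d ^ t * ∫ ω, |X ω| ^ t ∂μ := by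
  have hX' : AEStronglyMeasurable X μ := hX.aestronglyMeasurable
  have hplus := integrable_abs_mul_add_rpow hX' ht hint d c
  have hminus := integrable_abs_mul_add_rpow hX' ht hint d (-c)
  simp only [← sub_eq_add_neg] at hminus
  have hreflect : ∫ ω, |d * X ω - c| ^ t ∂μ = ∫ ω, |d * X ω + c| ^ t ∂μ := by
    rw [integral_comp_eq_integral_comp_neg hX hsymm (φ := fun x => |d * x - c| ^ t)
      (by fun_prop)]
    simp_rw [show ∀ x, |d * -x - c| = |d * x + c| from fun x => by rw [← abs_neg]; ring_nf]
  have hpow : ∀ x, |d * x| ^ t = d ^ t * |x| ^ t := fun x => by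
    rw [abs_mul, abs_of_nonneg hd, Real.mul_rpow hd (abs_nonneg x)]
  have hsum : Integrable (fun ω => |d * X ω + c| ^ t + |d * X ω - c| ^ t) μ :=
    hplus.add hminus
  simp only [secondDiff, hpow]
  rw [integral_sub hsum ((hint.const_mul _).const_mul _),
    integral_add hplus hminus, hreflect, integral_const_mul, integral_const_mul]
  ring

lemma secondDiff_abs_rpow_le_integral [IsProbabilityMeasure μ] (hX : AEStronglyMeasurable X μ)
    (ht : 4 ≤ t) (hint : Integrable (fun ω => |X ω| ^ t) μ) (d c : ℝ) :
    secondDiff (fun y => |y| ^ t) c √(∫ ω, (d * X ω) ^ 2 ∂μ)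
      ≤ ∫ ω, secondDiff (fun y => |y| ^ t) c (d * X ω) ∂μ := by
  have heven : Function.Even fun y : ℝ => |y| ^ t := fun y => by simp only [abs_neg]
  have hcomp : (fun s => secondDiff (fun y => |y| ^ t) c √s) ∘ (fun ω => (d * X ω) ^ 2)
      = fun ω => secondDiff (fun y => |y| ^ t) c (d * X ω) := by
    ext ω
    simp only [Function.comp_apply, Real.sqrt_sq_eq_abs, secondDiff_abs_of_even heven]
  have hsq : Integrable (fun ω => (d * X ω) ^ 2) μ := by
    simpa only [mul_pow] using
      (integrable_sq_of_integrable_abs_rpow hX (by linarith) hint).const_mul (d ^ 2)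
  have hcont : Continuous fun s => secondDiff (fun y => |y| ^ t) c √s :=
    ((continuous_abs.rpow_const fun _ => Or.inr (by linarith)).secondDiff c).comp
      Real.continuous_sqrt
  simpa only [Real.sqrt_sq_eq_abs, secondDiff_abs_of_even heven] using
    (convexOn_secondDiff_abs_rpow_sqrt ht c).map_integral_le
    hcont.continuousOn isClosed_Ici (Filter.Eventually.of_forall fun ω => sq_nonneg (d * X ω))
    hsq (hcomp ▸ integrable_secondDiff_abs_rpow hX (by linarith) hint d c)

end Moments

theorem moment_ineq_symm_rademacher_t_ge_four_general
    (t : ℝ) (ht : 4 ≤ t)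
    (z₁ z₂ : ℝ) (hz₁ : 0 ≤ z₁)
    (a b : ℝ) (ha : 0 ≤ a)
    -- a symmetric random variable `X` with `E X^2 = a^2` and `E|X|^t = b`
    (Ω : Type) [MeasurableSpace Ω] (μ : Measure Ω) [IsProbabilityMeasure μ]
    (X : Ω → ℝ) (hXmeas : Measurable X)
    (hXsymm : μ.map X = μ.map (fun ω => -X ω))
    (hXint : Integrable (fun ω => |X ω| ^ t) μ)
    (hX2 : ∫ ω, (X ω) ^ 2 ∂μ = a ^ 2)
    (hXt : ∫ ω, |X ω| ^ t ∂μ = b)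
    -- a Rademacher random variable `U`
    (Ω' : Type) [MeasurableSpace Ω'] (μ' : Measure Ω') [IsProbabilityMeasure μ']
    (U : Ω' → ℝ) (hUmeas : Measurable U)
    (hU1 : μ' {ω | U ω = 1} = 1 / 2) (hU2 : μ' {ω | U ω = -1} = 1 / 2) :
    (∫ ω, |a * z₁ * U ω + z₂| ^ t ∂μ') - a ^ t * z₁ ^ t
      ≤ (∫ ω, |z₁ * X ω + z₂| ^ t ∂μ) - b * z₁ ^ t := by
  have hmean : ∫ ω, (z₁ * X ω) ^ 2 ∂μ = (z₁ * a) ^ 2 := by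
    simp only [mul_pow, integral_const_mul, hX2]
  have hjensen := secondDiff_abs_rpow_le_integral hXmeas.aestronglyMeasurable ht hXint z₁ z₂
  rw [integral_secondDiff_abs_rpow_of_symm hXmeas hXsymm (by linarith) hXint hz₁, hXt, hmean,
    Real.sqrt_sq (mul_nonneg hz₁ ha)] at hjensen
  rw [integral_comp_rademacher hUmeas hU1 hU2 (f := fun u => |a * z₁ * u + z₂| ^ t)
    (by fun_prop)]
  simp only [secondDiff, abs_mul, abs_of_nonneg hz₁, abs_of_nonneg ha,
    Real.mul_rpow hz₁ ha] at hjensen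
  rw [show a * z₁ * -1 + z₂ = -(z₁ * a - z₂) by ring, abs_neg, mul_one, mul_comm a]
  linarith

theorem moment_ineq_symm_rademacher_t_ge_four
    (t : ℝ) (ht : 4 ≤ t)
    (z₁ z₂ : ℝ) (hz₁ : 0 ≤ z₁)
    (a b : ℝ) (ha : 0 ≤ a) (hb : 0 ≤ b) (hab : a ^ t ≤ b)
    -- a symmetric random variable `X` with `E X^2 = a^2` and `E|X|^t = b`
    (Ω : Type) [MeasurableSpace Ω] (μ : Measure Ω) [IsProbabilityMeasure μ]
    (X : Ω → ℝ) (hXmeas : Measurable X)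
    (hXsymm : μ.map X = μ.map (fun ω => -X ω))
    (hXint : Integrable (fun ω => |X ω| ^ t) μ)
    (hX2 : ∫ ω, (X ω) ^ 2 ∂μ = a ^ 2)
    (hXt : ∫ ω, |X ω| ^ t ∂μ = b)
    -- a Rademacher random variable `U`
    (Ω' : Type) [MeasurableSpace Ω'] (μ' : Measure Ω') [IsProbabilityMeasure μ']
    (U : Ω' → ℝ) (hUmeas : Measurable U)
    (hU1 : μ' {ω | U ω = 1} = 1 / 2) (hU2 : μ' {ω | U ω = -1} = 1 / 2) :
    (∫ ω, |a * z₁ * U ω + z₂| ^ t ∂μ') - a ^ t * z₁ ^ t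
      ≤ (∫ ω, |z₁ * X ω + z₂| ^ t ∂μ) - b * z₁ ^ t :=
  moment_ineq_symm_rademacher_t_ge_four_general t ht z₁ z₂ hz₁ a b ha Ω μ X hXmeas hXsymm hXint hX2
    hXt Ω' μ' U hUmeas hU1 hU2
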